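/- Suppose (X_n) is strictly stationary and regularly varying with index α ∈ (0,2), n·P(|X_1|>a_n)→1, k_n = ⌊n/r_n⌋ = o(n^t) for some 0 < t < 1, and (l_n) is a sequence of positive reals with l_n/n^q → 1 where q = (1/2)·min{ 1/α, (1−t)/(1+α) }. Then for every γ > 0, k_n · P( |S_{l_n}| > γ a_n ) → 0 as n → ∞ (here S_{l_n} denotes the sum of the first ⌊l_n⌋ terms). -/

import Mathlib

open MeasureTheory Filter Set
noncomputable section

def SlowlyVaryingAt (L : ℝ → ℝ) : Prop :=
  ∀ c : ℝ, 0 < c → Tendsto (fun x => L (c * x) / L x) atTop (nhds 1)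

def RegVarOf {Ω : Type*} [MeasurableSpace Ω] (P : Measure Ω) (Y : Ω → ℝ) (α : ℝ) : Prop :=
  ∃ L : ℝ → ℝ, Measurable L ∧ (∀ x : ℝ, 0 < x → 0 < L x) ∧ SlowlyVaryingAt L ∧
    ∀ x : ℝ, 0 < x → (P {ω | x < |Y ω|}).toReal = x ^ (-α) * L x

def IsStationarySeq {Ω : Type*} [MeasurableSpace Ω] (P : Measure Ω) (X : ℕ → Ω → ℝ) : Prop :=
  ∀ m : ℕ, Measure.map (fun ω => fun i : ℕ => X (i + m) ω) P
    = Measure.map (fun ω => fun i : ℕ => X i ω) P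

def pS {Ω : Type*} (X : ℕ → Ω → ℝ) (m : ℕ) (ω : Ω) : ℝ := ∑ i ∈ Finset.range m, X i ω

def blockS {Ω : Type*} (X : ℕ → Ω → ℝ) (r k : ℕ) (ω : Ω) : ℝ :=
  ∑ i ∈ Finset.range r, X ((k - 1) * r + i) ω

def truncBlock {Ω : Type*} (X : ℕ → Ω → ℝ) (a : ℝ) (r : ℕ) (u : ℝ) (k : ℕ) (ω : Ω) : ℝ :=
  if |blockS X r k ω| / a ≤ u then blockS X r k ω / a else 0

def nuDens (α cp cm : ℝ) (x : ℝ) : ℝ :=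
  if 0 < x then cp * α * x ^ (-α - 1)
  else if x < 0 then cm * α * (-x) ^ (-α - 1) else 0

def nuMeasure (α cp cm : ℝ) : Measure ℝ :=
  MeasureTheory.volume.withDensity (fun x => ENNReal.ofReal (nuDens α cp cm x))

def pastSigma {Ω : Type*} (X : ℕ → Ω → ℝ) (j : ℕ) : MeasurableSpace Ω :=
  ⨆ i ∈ Set.Iic j, MeasurableSpace.comap (X i) inferInstance

def futureSigma {Ω : Type*} (X : ℕ → Ω → ℝ) (j : ℕ) : MeasurableSpace Ω :=
  ⨆ i ∈ Set.Ici j, MeasurableSpace.comap (X i) inferInstance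

def alphaDep {Ω : Type*} [MeasurableSpace Ω] (P : Measure Ω) (mA mB : MeasurableSpace Ω) : ℝ :=
  sSup {d : ℝ | ∃ A B : Set Ω, MeasurableSet[mA] A ∧ MeasurableSet[mB] B ∧
    d = |(P (A ∩ B)).toReal - (P A).toReal * (P B).toReal|}

def alphaMix {Ω : Type*} [MeasurableSpace Ω] (P : Measure Ω) (X : ℕ → Ω → ℝ) (m : ℕ) : ℝ :=
  ⨆ j : ℕ, alphaDep P (pastSigma X j) (futureSigma X (j + m))

def rhoDep {Ω : Type*} [MeasurableSpace Ω] (P : Measure Ω) (mA mB : MeasurableSpace Ω) : ℝ :=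
  sSup {d : ℝ | ∃ f g : Ω → ℝ, Measurable[mA] f ∧ Measurable[mB] g ∧
    MemLp f 2 P ∧ MemLp g 2 P ∧
    d = |(∫ ω, f ω * g ω ∂P) - (∫ ω, f ω ∂P) * (∫ ω, g ω ∂P)| /
      Real.sqrt ((∫ ω, (f ω) ^ 2 ∂P) * (∫ ω, (g ω) ^ 2 ∂P))}

def rhoMix {Ω : Type*} [MeasurableSpace Ω] (P : Measure Ω) (X : ℕ → Ω → ℝ) (m : ℕ) : ℝ :=
  ⨆ j : ℕ, rhoDep P (pastSigma X j) (futureSigma X (j + m))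

def CKplus (f : ℝ → ℝ) : Prop :=
  Continuous f ∧ (∀ x, 0 ≤ f x) ∧ (∃ M : ℝ, ∀ x, f x ≤ M) ∧
  (∃ r : ℝ, 0 < r ∧ ∀ x : ℝ, |x| ≤ r → f x = 0) ∧
  (∃ lp : ℝ, Tendsto f atTop (nhds lp)) ∧ (∃ lm : ℝ, Tendsto f atBot (nhds lm))

/-! By stationarity and a union bound, `P(|S_m| > γ a_n) ≤ m P(|X_0| > γ a_n / m)`.
Iterating `L(x) ≤ 2^ε L(2x)` for the slowly varying `L` gives a Potter bound
`P(|X_0| > x) ≤ (2y/x)^β P(|X_0| > y)` for `x₀ ≤ x ≤ y`, with any `β > α`.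
Taken at `x = x₀`, `y = a_n` together with `n P(|X_0| > a_n) → 1` it shows that `a_n` grows
faster than `n^q`, so `γ a_n / m` with `m = ⌊l_n⌋ ≈ n^q` is eventually in its range; taken at
`x = γ a_n / m`, `y = a_n` it bounds the block probability by a multiple of `m^(β+1) / n`.
Since `k_n ≤ n^t`, the product is `O(n^(t + q(β+1) - 1))`, and the choice of `q` leaves room
for some `β > α` with `t + q(β+1) < 1`. -/

open ProbabilityTheory Topology

lemma Antitone.le_rpow_mul_of_doubling {F : ℝ → ℝ} {β x₀ : ℝ} (hF : Antitone F)
    (hF0 : ∀ x, 0 ≤ F x) (hβ : 0 ≤ β) (hx₀ : 0 < x₀)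
    (hdouble : ∀ x, x₀ ≤ x → F x ≤ 2 ^ β * F (2 * x)) {x y : ℝ} (hx : x₀ ≤ x) (hxy : x ≤ y) :
    F x ≤ (2 * y / x) ^ β * F y := by
  have hx0 : 0 < x := hx₀.trans_le hx
  have hiter : ∀ k : ℕ, F x ≤ ((2 : ℝ) ^ k) ^ β * F (2 ^ k * x) := by
    intro k
    induction k with
    | zero => simp
    | succ k ih =>
      have hle : x₀ ≤ 2 ^ k * x :=
        hx.trans (le_mul_of_one_le_left hx0.le (one_le_pow₀ one_le_two))
      calc F x ≤ ((2 : ℝ) ^ k) ^ β * F (2 ^ k * x) := ih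
        _ ≤ ((2 : ℝ) ^ k) ^ β * (2 ^ β * F (2 * (2 ^ k * x))) := by gcongr; exact hdouble _ hle
        _ = ((2 : ℝ) ^ (k + 1)) ^ β * F (2 ^ (k + 1) * x) := by
          rw [pow_succ, Real.mul_rpow (by positivity) zero_le_two]; ring_nf
  obtain ⟨k, hk, hk'⟩ := exists_nat_pow_near ((one_le_div hx0).2 hxy) one_lt_two
  calc F x ≤ ((2 : ℝ) ^ (k + 1)) ^ β * F (2 ^ (k + 1) * x) := hiter (k + 1)
    _ ≤ (2 * y / x) ^ β * F y := by
      refine mul_le_mul ?_ (hF ((div_lt_iff₀ hx0).1 hk').le) (hF0 _)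
        (Real.rpow_nonneg (div_nonneg (by linarith) hx0.le) _)
      rw [pow_succ', mul_div_assoc]
      gcongr

lemma SlowlyVaryingAt.eventually_le_two_rpow_mul {L : ℝ → ℝ} (hL : SlowlyVaryingAt L)
    (hpos : ∀ᶠ x in atTop, 0 < L x) {ε : ℝ} (hε : 0 < ε) :
    ∀ᶠ x in atTop, L x ≤ 2 ^ ε * L (2 * x) := by
  have hlt : (2 : ℝ) ^ (-ε) < 1 :=
    Real.rpow_lt_one_of_one_lt_of_neg one_lt_two (neg_lt_zero.2 hε)
  filter_upwards [(hL 2 two_pos).eventually_const_lt hlt, hpos] with x hx hLx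
  rw [lt_div_iff₀ hLx, Real.rpow_neg zero_le_two, inv_mul_lt_iff₀ (by positivity)] at hx
  exact hx.le

def absTail {Ω : Type*} [MeasurableSpace Ω] (P : Measure Ω) (Y : Ω → ℝ) (x : ℝ) : ℝ :=
  (P {ω | x < |Y ω|}).toReal

section Tail

variable {Ω : Type*} [MeasurableSpace Ω] {P : Measure Ω}

lemma absTail_antitone [IsFiniteMeasure P] (Y : Ω → ℝ) : Antitone (absTail P Y) :=
  fun _ _ hxy =>
    ENNReal.toReal_mono (measure_ne_top P _) (measure_mono fun _ hω => hxy.trans_lt hω)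

lemma RegVarOf.exists_potter_bound [IsFiniteMeasure P] {Y : Ω → ℝ} {α β : ℝ}
    (h : RegVarOf P Y α) (hβ : 0 ≤ β) (hαβ : α < β) :
    ∃ x₀ > 0, 0 < absTail P Y x₀ ∧
      ∀ x y, x₀ ≤ x → x ≤ y → absTail P Y x ≤ (2 * y / x) ^ β * absTail P Y y := by
  obtain ⟨L, -, hLpos, hL, hF⟩ := h
  have hF : ∀ x, 0 < x → absTail P Y x = x ^ (-α) * L x := hF
  obtain ⟨x₁, hx₁⟩ := eventually_atTop.1 <|
    hL.eventually_le_two_rpow_mul ((eventually_gt_atTop 0).mono hLpos) (sub_pos.2 hαβ)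
  have hx₀ : 0 < max x₁ 1 := lt_max_of_lt_right one_pos
  have hdouble : ∀ x, max x₁ 1 ≤ x → absTail P Y x ≤ 2 ^ β * absTail P Y (2 * x) := by
    intro x hx
    have hx0 : 0 < x := hx₀.trans_le hx
    rw [hF x hx0, hF (2 * x) (by positivity), Real.mul_rpow zero_le_two hx0.le]
    calc x ^ (-α) * L x ≤ x ^ (-α) * (2 ^ (β - α) * L (2 * x)) := by
          gcongr; exact hx₁ x (le_of_max_le_left hx)
      _ = 2 ^ β * (2 ^ (-α) * x ^ (-α) * L (2 * x)) := by
          rw [sub_eq_add_neg, Real.rpow_add two_pos]; ring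
  refine ⟨max x₁ 1, hx₀, ?_, fun x y hx hxy => (absTail_antitone Y).le_rpow_mul_of_doubling
    (fun _ => ENNReal.toReal_nonneg) hβ hx₀ hdouble hx hxy⟩
  rw [hF _ hx₀]
  exact mul_pos (Real.rpow_pos_of_pos hx₀ _) (hLpos _ hx₀)

end Tail

section Stationary

variable {Ω : Type*} [MeasurableSpace Ω] {P : Measure Ω} {X : ℕ → Ω → ℝ}

lemma IsStationarySeq.identDistrib (h : IsStationarySeq P X) (hX : ∀ i, Measurable (X i))
    (i : ℕ) : IdentDistrib (X i) (X 0) P P where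
  aemeasurable_fst := (hX i).aemeasurable
  aemeasurable_snd := (hX 0).aemeasurable
  map_eq := by
    have h0 := congrArg (Measure.map fun y : ℕ → ℝ => y 0) (h i)
    rw [Measure.map_map (measurable_pi_apply 0) (measurable_pi_lambda _ fun j => hX (j + i)),
      Measure.map_map (measurable_pi_apply 0) (measurable_pi_lambda _ hX)] at h0
    simpa only [Function.comp_def, zero_add] using h0

lemma IsStationarySeq.absTail_eq (h : IsStationarySeq P X) (hX : ∀ i, Measurable (X i))
    (i : ℕ) (x : ℝ) : absTail P (X i) x = absTail P (X 0) x :=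
  congrArg ENNReal.toReal (((h.identDistrib hX i).comp measurable_abs).measure_mem_eq
    measurableSet_Ioi)

lemma IsStationarySeq.absTail_pS_le [IsFiniteMeasure P] (h : IsStationarySeq P X)
    (hX : ∀ i, Measurable (X i)) {m : ℕ} (hm : m ≠ 0) (s : ℝ) :
    absTail P (pS X m) s ≤ m * absTail P (X 0) (s / m) := by
  have hsub : {ω | s < |pS X m ω|} ⊆ ⋃ i ∈ Finset.range m, {ω | s / m < |X i ω|} := by
    intro ω hω
    have hlt : ∑ _i ∈ Finset.range m, s / m < ∑ i ∈ Finset.range m, |X i ω| := by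
      rw [Finset.sum_const, Finset.card_range, nsmul_eq_mul, mul_div_cancel₀ _ (by positivity)]
      exact hω.out.trans_le (Finset.abs_sum_le_sum_abs _ _)
    obtain ⟨i, hi, hXi⟩ := Finset.exists_lt_of_sum_lt hlt
    exact mem_biUnion hi hXi
  calc absTail P (pS X m) s ≤ (∑ i ∈ Finset.range m, P {ω | s / m < |X i ω|}).toReal :=
        ENNReal.toReal_mono (ENNReal.sum_ne_top.2 fun _ _ => measure_ne_top _ _)
          ((measure_mono hsub).trans (measure_biUnion_finset_le _ _))
    _ = m * absTail P (X 0) (s / m) := by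
        rw [ENNReal.toReal_sum fun _ _ => measure_ne_top _ _]
        change ∑ i ∈ Finset.range m, absTail P (X i) (s / m) = _
        simp [h.absTail_eq hX]

lemma IsStationarySeq.absTail_pS_le_of_potter [IsFiniteMeasure P] (h : IsStationarySeq P X)
    (hX : ∀ i, Measurable (X i)) {β x₀ : ℝ} (hx₀ : 0 < x₀)
    (hpotter : ∀ x y, x₀ ≤ x → x ≤ y → absTail P (X 0) x ≤ (2 * y / x) ^ β * absTail P (X 0) y)
    {m : ℕ} {γ s : ℝ} (hγ : 0 < γ) (hγm : γ ≤ m) (hs : x₀ ≤ γ * s / m) :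
    absTail P (pS X m) (γ * s) ≤ (2 / γ) ^ β * ((m : ℝ) ^ (β + 1) * absTail P (X 0) s) := by
  have hm : (0 : ℝ) < m := hγ.trans_le hγm
  have hs0 : 0 < s :=
    pos_of_mul_pos_right ((div_pos_iff_of_pos_right hm).1 (hx₀.trans_le hs)) hγ.le
  have hratio : 2 * s / (γ * s / m) = 2 / γ * m := by field_simp
  calc absTail P (pS X m) (γ * s) ≤ m * absTail P (X 0) (γ * s / m) :=
        h.absTail_pS_le hX (Nat.cast_pos.1 hm).ne' _
    _ ≤ m * ((2 / γ * m) ^ β * absTail P (X 0) s) := by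
        rw [← hratio]
        gcongr
        refine hpotter _ _ hs ?_
        rw [div_le_iff₀ hm]
        nlinarith
    _ = (2 / γ) ^ β * ((m : ℝ) ^ (β + 1) * absTail P (X 0) s) := by
        rw [Real.mul_rpow (by positivity) hm.le, Real.rpow_add_one hm.ne']
        ring

lemma IsStationarySeq.eventually_absTail_pS_le [IsFiniteMeasure P] (h : IsStationarySeq P X)
    (hX : ∀ i, Measurable (X i)) {β x₀ : ℝ} (hx₀ : 0 < x₀)
    (hpotter : ∀ x y, x₀ ≤ x → x ≤ y → absTail P (X 0) x ≤ (2 * y / x) ^ β * absTail P (X 0) y)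
    {γ q : ℝ} (hγ : 0 < γ) {m : ℕ → ℕ} {s : ℕ → ℝ} (hm_top : Tendsto m atTop atTop)
    (hm : ∀ᶠ n : ℕ in atTop, (m n : ℝ) ≤ 2 * (n : ℝ) ^ q)
    (hs : Tendsto (fun n : ℕ => s n / (n : ℝ) ^ q) atTop atTop) :
    ∀ᶠ n in atTop, absTail P (pS X (m n)) (γ * s n) ≤
      (2 / γ) ^ β * ((m n : ℝ) ^ (β + 1) * absTail P (X 0) (s n)) := by
  filter_upwards [(tendsto_natCast_atTop_atTop.comp hm_top).eventually_ge_atTop γ, hm,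
    hs.eventually_ge_atTop (2 * x₀ / γ), eventually_gt_atTop 0] with n hγm hmn hsn hn
  have hnq : 0 < (n : ℝ) ^ q := Real.rpow_pos_of_pos (Nat.cast_pos.2 hn) q
  have hm0 : (0 : ℝ) < m n := hγ.trans_le hγm
  have hs0 : 0 ≤ s n :=
    ((div_pos_iff_of_pos_right hnq).1 ((div_pos (by positivity) hγ).trans_le hsn)).le
  refine h.absTail_pS_le_of_potter hX hx₀ hpotter hγ hγm ?_
  calc x₀ = γ / 2 * (2 * x₀ / γ) := by field_simp
    _ ≤ γ / 2 * (s n / (n : ℝ) ^ q) := by gcongr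
    _ = γ * s n / (2 * (n : ℝ) ^ q) := by ring
    _ ≤ γ * s n / m n := by gcongr

end Stationary

lemma exists_exponent_of_eq_min {α t q : ℝ} (hα : 0 < α) (ht : t < 1)
    (hq : q = min (1 / α) ((1 - t) / (1 + α)) / 2) :
    0 < q ∧ ∃ β, α < β ∧ q * β < 1 ∧ t + q * (β + 1) < 1 := by
  have h1 : min (1 / α) ((1 - t) / (1 + α)) ≤ 1 / α := min_le_left _ _
  have h2 : min (1 / α) ((1 - t) / (1 + α)) ≤ (1 - t) / (1 + α) := min_le_right _ _
  have hq0 : 0 < q := by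
    rw [hq]
    exact half_pos (lt_min (by positivity) (div_pos (by linarith) (by linarith)))
  have hqα : q * α < 1 := by
    rw [le_div_iff₀ hα] at h1
    nlinarith
  have hqt : t + q * (α + 1) < 1 := by
    rw [le_div_iff₀ (by linarith)] at h2
    nlinarith
  have hev : ∀ᶠ β in 𝓝 α, q * β < 1 ∧ t + q * (β + 1) < 1 :=
    ((Continuous.tendsto (by fun_prop) α).eventually_lt_const hqα).and
      ((Continuous.tendsto (by fun_prop) α).eventually_lt_const hqt)
  obtain ⟨β, ⟨hqβ, he⟩, hαβ⟩ :=
    ((hev.filter_mono nhdsWithin_le_nhds).and (self_mem_nhdsWithin (s := Ioi α))).exists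
  exact ⟨hq0, β, hαβ, hqβ, he⟩

lemma tendsto_atTop_of_tendsto_div_rpow {l : ℕ → ℝ} {q : ℝ} (hq : 0 < q)
    (hl : Tendsto (fun n : ℕ => l n / (n : ℝ) ^ q) atTop (𝓝 1)) : Tendsto l atTop atTop := by
  have hnq : Tendsto (fun n : ℕ => (n : ℝ) ^ q) atTop atTop :=
    (tendsto_rpow_atTop hq).comp tendsto_natCast_atTop_atTop
  refine (hl.pos_mul_atTop one_pos hnq).congr' ?_
  filter_upwards [hnq.eventually_gt_atTop 0] with n hn
  exact div_mul_cancel₀ _ hn.ne'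

lemma tendsto_div_rpow_atTop_of_potter {F : ℝ → ℝ} {β x₀ q : ℝ} (hF : Antitone F)
    (hβ : 0 < β) (hqβ : q * β < 1) (hx₀ : 0 < x₀) (hFx₀ : 0 < F x₀)
    (hpotter : ∀ y, x₀ ≤ y → F x₀ ≤ (2 * y / x₀) ^ β * F y) {a : ℕ → ℝ}
    (ha : Tendsto (fun n : ℕ => n * F (a n)) atTop (𝓝 1)) :
    Tendsto (fun n : ℕ => a n / (n : ℝ) ^ q) atTop atTop := by
  set c := x₀ / 2 * (F x₀ / 2) ^ (1 / β)
  have hc : 0 < c := mul_pos (half_pos hx₀) (Real.rpow_pos_of_pos (half_pos hFx₀) _)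
  have hexp : 0 < 1 / β - q := by
    rw [sub_pos, lt_div_iff₀ hβ]
    exact hqβ
  have hlim : Tendsto (fun n : ℕ => c * (n : ℝ) ^ (1 / β - q)) atTop atTop :=
    ((tendsto_rpow_atTop hexp).comp tendsto_natCast_atTop_atTop).const_mul_atTop hc
  have hFa : Tendsto (fun n => F (a n)) atTop (𝓝 0) := by
    have := ha.mul tendsto_inv_atTop_nhds_zero_nat
    rw [one_mul] at this
    refine this.congr' ?_
    filter_upwards [eventually_ne_atTop 0] with n hn
    field_simp
  refine tendsto_atTop_mono' atTop ?_ hlim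
  filter_upwards [hFa.eventually_lt_const hFx₀, ha.eventually_lt_const one_lt_two,
    eventually_gt_atTop 0] with n hFan hnF hn
  have hn : (0 : ℝ) < n := Nat.cast_pos.2 hn
  have hxa : x₀ ≤ a n := le_of_not_gt fun h => hFan.not_ge (hF h.le)
  have hb : 0 ≤ 2 * a n / x₀ := div_nonneg (by linarith) hx₀.le
  have hgrowth : n * (F x₀ / 2) ≤ (2 * a n / x₀) ^ β := by
    have := hpotter _ hxa
    have : 0 ≤ (2 * a n / x₀) ^ β := Real.rpow_nonneg hb _
    nlinarith
  calc c * (n : ℝ) ^ (1 / β - q) = x₀ / 2 * (n * (F x₀ / 2)) ^ (1 / β) / (n : ℝ) ^ q := by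
        rw [Real.mul_rpow hn.le (by positivity), Real.rpow_sub hn]
        ring
    _ ≤ x₀ / 2 * ((2 * a n / x₀) ^ β) ^ (1 / β) / (n : ℝ) ^ q := by gcongr
    _ = a n / (n : ℝ) ^ q := by
        rw [← Real.rpow_mul hb, mul_one_div_cancel hβ.ne', Real.rpow_one]
        field_simp

lemma tendsto_mul_rpow_mul_zero {k m f : ℕ → ℝ} {t q β : ℝ} (hβ : 0 ≤ β)
    (he : t + q * (β + 1) < 1) (hk0 : ∀ n, 0 ≤ k n) (hk : ∀ᶠ n in atTop, k n ≤ (n : ℝ) ^ t)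
    (hm0 : ∀ n, 0 ≤ m n) (hm : ∀ᶠ n in atTop, m n ≤ 2 * (n : ℝ) ^ q)
    (hf0 : ∀ n, 0 ≤ f n) (hf : Tendsto (fun n : ℕ => n * f n) atTop (𝓝 1)) :
    Tendsto (fun n => k n * (m n ^ (β + 1) * f n)) atTop (𝓝 0) := by
  have hlim : Tendsto (fun n : ℕ => 2 ^ (β + 1) * 2 * (n : ℝ) ^ (t + q * (β + 1) - 1)) atTop
      (𝓝 0) := by
    simpa using ((tendsto_rpow_neg_atTop (neg_pos.2 (sub_neg.2 he))).comp
      tendsto_natCast_atTop_atTop).const_mul (2 ^ (β + 1) * 2)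
  refine squeeze_zero' (Eventually.of_forall fun n =>
    mul_nonneg (hk0 n) (mul_nonneg (Real.rpow_nonneg (hm0 n) _) (hf0 n))) ?_ hlim
  filter_upwards [hk, hm, hf.eventually_lt_const one_lt_two, eventually_gt_atTop 0]
    with n hkn hmn hfn hn
  have hn : (0 : ℝ) < n := Nat.cast_pos.2 hn
  have hfn : f n ≤ 2 / n := by
    rw [le_div_iff₀ hn]
    linarith
  have hm0 := hm0 n
  have hf0 := hf0 n
  calc k n * (m n ^ (β + 1) * f n)
        ≤ (n : ℝ) ^ t * ((2 * (n : ℝ) ^ q) ^ (β + 1) * (2 / n)) := by gcongr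
    _ = 2 ^ (β + 1) * 2 * (n : ℝ) ^ (t + q * (β + 1) - 1) := by
        rw [Real.mul_rpow zero_le_two (by positivity), ← Real.rpow_mul hn.le,
          Real.rpow_sub_one hn.ne', Real.rpow_add hn]
        ring

theorem stmt7_general
    {Ω : Type*} [MeasurableSpace Ω] (P : Measure Ω) [IsProbabilityMeasure P]
    (X : ℕ → Ω → ℝ) (hXmeas : ∀ i, Measurable (X i))
    (hstat : IsStationarySeq P X)
    (α : ℝ) (hα0 : 0 < α)
    (hreg : RegVarOf P (X 0) α)
    (a : ℕ → ℝ)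
    (hna : Tendsto (fun n : ℕ => (n : ℝ) * (P {ω | a n < |X 0 ω|}).toReal) atTop (nhds 1))
    (r : ℕ → ℕ)
    (t : ℝ) (ht1 : t < 1)
    (hkn : Tendsto (fun n : ℕ => ((n / r n : ℕ) : ℝ) / (n : ℝ) ^ t) atTop (nhds 0))
    (q : ℝ) (hq : q = (min (1 / α) ((1 - t) / (1 + α))) / 2)
    (l : ℕ → ℝ)
    (hl : Tendsto (fun n : ℕ => l n / (n : ℝ) ^ q) atTop (nhds 1)) :
    ∀ γ : ℝ, 0 < γ →
      Tendsto (fun n : ℕ => ((n / r n : ℕ) : ℝ) *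
          (P {ω | γ * a n < |pS X ⌊l n⌋₊ ω|}).toReal) atTop (nhds 0) := by
  intro γ hγ
  obtain ⟨hq0, β, hαβ, hqβ, he⟩ := exists_exponent_of_eq_min hα0 ht1 hq
  have hβ : 0 < β := hα0.trans hαβ
  obtain ⟨x₀, hx₀, hFx₀, hpotter⟩ := hreg.exists_potter_bound hβ.le hαβ
  have ha : Tendsto (fun n : ℕ => a n / (n : ℝ) ^ q) atTop atTop :=
    tendsto_div_rpow_atTop_of_potter (absTail_antitone _) hβ hqβ hx₀ hFx₀
      (fun y hy => hpotter _ _ le_rfl hy) hna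
  have hl_top : Tendsto l atTop atTop := tendsto_atTop_of_tendsto_div_rpow hq0 hl
  have hm : ∀ᶠ n : ℕ in atTop, (⌊l n⌋₊ : ℝ) ≤ 2 * (n : ℝ) ^ q := by
    filter_upwards [hl.eventually_lt_const one_lt_two, eventually_gt_atTop 0,
      hl_top.eventually_ge_atTop 0] with n hln hn hl0
    exact (Nat.floor_le hl0).trans ((div_lt_iff₀ (by positivity)).1 hln).le
  have hk : ∀ᶠ n : ℕ in atTop, ((n / r n : ℕ) : ℝ) ≤ (n : ℝ) ^ t := by
    filter_upwards [hkn.eventually_lt_const one_pos, eventually_gt_atTop 0] with n hkn hn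
    exact ((div_lt_one (by positivity)).1 hkn).le
  have hlim := (tendsto_mul_rpow_mul_zero hβ.le he (fun _ => Nat.cast_nonneg _) hk
    (fun _ => Nat.cast_nonneg _) hm (fun _ => ENNReal.toReal_nonneg) hna).const_mul
      ((2 / γ) ^ β)
  rw [mul_zero] at hlim
  refine squeeze_zero' (Eventually.of_forall fun n => by positivity) ?_ hlim
  filter_upwards [hstat.eventually_absTail_pS_le hXmeas hx₀ hpotter hγ
    (tendsto_nat_floor_atTop.comp hl_top) hm ha] with n hn
  calc _ ≤ ((n / r n : ℕ) : ℝ) *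
        ((2 / γ) ^ β * ((⌊l n⌋₊ : ℝ) ^ (β + 1) * absTail P (X 0) (a n))) :=
      mul_le_mul_of_nonneg_left hn (Nat.cast_nonneg _)
    _ = _ := by unfold absTail; ring

/-- Under regular variation with index α ∈ (0,2), k_n = o(n^t) and
l_n ~ n^q with q = (1/2)·min{1/α, (1−t)/(1+α)}, it holds that
k_n · P(|S_{⌊l_n⌋}| > γ a_n) → 0 for every γ > 0. -/
theorem stmt7
    {Ω : Type*} [MeasurableSpace Ω] (P : Measure Ω) [IsProbabilityMeasure P]
    (X : ℕ → Ω → ℝ) (hXmeas : ∀ i, Measurable (X i))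
    (hstat : IsStationarySeq P X)
    (α : ℝ) (hα0 : 0 < α) (hα2 : α < 2)
    (hreg : RegVarOf P (X 0) α)
    (a : ℕ → ℝ) (hapos : ∀ n, 0 < a n)
    (hna : Tendsto (fun n : ℕ => (n : ℝ) * (P {ω | a n < |X 0 ω|}).toReal) atTop (nhds 1))
    (r : ℕ → ℕ) (hrpos : ∀ n, 1 ≤ r n)
    (hrinf : Tendsto r atTop atTop)
    (hrn : Tendsto (fun n : ℕ => (r n : ℝ) / (n : ℝ)) atTop (nhds 0))
    (t : ℝ) (ht0 : 0 < t) (ht1 : t < 1)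
    (hkn : Tendsto (fun n : ℕ => ((n / r n : ℕ) : ℝ) / (n : ℝ) ^ t) atTop (nhds 0))
    (q : ℝ) (hq : q = (min (1 / α) ((1 - t) / (1 + α))) / 2)
    (l : ℕ → ℝ) (hlpos : ∀ n, 0 < l n)
    (hl : Tendsto (fun n : ℕ => l n / (n : ℝ) ^ q) atTop (nhds 1)) :
    ∀ γ : ℝ, 0 < γ →
      Tendsto (fun n : ℕ => ((n / r n : ℕ) : ℝ) *
          (P {ω | γ * a n < |pS X ⌊l n⌋₊ ω|}).toReal) atTop (nhds 0) :=
  stmt7_general P X hXmeas hstat α hα0 hreg a hna r t ht1 hkn q hq l hl
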